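/- arXiv:2012.08718 — 8 statements merged into one kernel-verified Lean document; each statement's English description precedes it below -/
import Mathlib

section
/- Monotone expansion of the passive set (Theorem 1, definition of indexability): for all integers τ ≥ 1, b ≥ 0 and all reals δ₁ ≤ δ₂, if the passive action is optimal at state (τ,b) under subsidy δ₁ (i.e. g_{δ₁}(τ,b) ≥ 0) then it is also optimal under subsidy δ₂ (i.e. g_{δ₂}(τ,b) ≥ 0). -/
/-!
Write `ΔV(t, x) = V_{δ₂}(t, x) - V_{δ₁}(t, x)` and `d = δ₂ - δ₁`. For `τ ≥ 2`,
`g_{δ₂}(τ, b) - g_{δ₁}(τ, b) = d - β (ΔV(τ-1, b-k) - ΔV(τ-1, b-1))`, so with `0 ≤ β ≤ 1` it suffices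
that `ΔV(t, x-k) ≤ ΔV(t, x-1) + d`. This is proved by induction on `t`, starting from
`0 ≤ ΔV(1, x) ≤ d`: since `x-k-1 = x-1-k`,
the passive successor of `x-k` is the active successor of `x-1`, which lets every action value at
`x-k` be compared with an action value at `x-1` through the induction hypothesis.
-/

noncomputable def F (α : ℝ) (x : ℕ) : ℝ := α * (x : ℝ) ^ 2

noncomputable def V (k : ℕ) (E α β δ : ℝ) : ℕ → ℕ → ℝ
  | 0, _ => 0
  | 1, 0 => max δ 0
  | 1, b + 1 => max (δ - F α b) (E - F α (b + 1 - k))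
  | t + 2, b =>
      max (δ + β * V k E α β δ (t + 1) (b - 1))
        ((if 1 ≤ b then E else 0) + β * V k E α β δ (t + 1) (b - k))

noncomputable def g (k : ℕ) (E α β δ : ℝ) : ℕ → ℕ → ℝ
  | 0, _ => 0
  | 1, 0 => δ
  | 1, b + 1 => δ - F α b - E + F α (b + 1 - k)
  | t + 2, b =>
      δ + β * V k E α β δ (t + 1) (b - 1) - (if 1 ≤ b then E else 0)
        - β * V k E α β δ (t + 1) (b - k)

noncomputable def whittle (k : ℕ) (E α β : ℝ) (τ b : ℕ) : ℝ :=
  sInf {δ : ℝ | 0 ≤ g k E α β δ τ b}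

theorem min_sub_le_max_sub_max {α : Type*} [LinearOrder α] [AddCommGroup α] [IsOrderedAddMonoid α]
    (a b c d : α) : min (a - c) (b - d) ≤ max a b - max c d :=
  calc min (a - c) (b - d) = -max (c - a) (d - b) := by rw [← min_neg_neg, neg_sub, neg_sub]
    _ ≤ -(max c d - max a b) := neg_le_neg (max_sub_max_le_max c d a b)
    _ = max a b - max c d := neg_sub _ _

section

variable (k : ℕ) (E α β : ℝ) {δ₁ δ₂ : ℝ}

theorem V_add_two (δ : ℝ) (t b : ℕ) :
    V k E α β δ (t + 2) b =
      max (δ + β * V k E α β δ (t + 1) (b - 1))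
        ((if 1 ≤ b then E else 0) + β * V k E α β δ (t + 1) (b - k)) :=
  rfl

theorem V_one_mono (hδ : δ₁ ≤ δ₂) (x : ℕ) : V k E α β δ₁ 1 x ≤ V k E α β δ₂ 1 x := by
  cases x <;> exact max_le_max (by linarith) le_rfl

theorem V_one_sub_le (hδ : δ₁ ≤ δ₂) (x : ℕ) :
    V k E α β δ₂ 1 x - V k E α β δ₁ 1 x ≤ δ₂ - δ₁ := by
  cases x <;>
  exact (max_sub_max_le_max _ _ _ _).trans (max_le (by linarith) (by linarith))

theorem V_add_two_sub_le (δ₁ δ₂ : ℝ) (t x : ℕ) :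
    V k E α β δ₂ (t + 2) x - V k E α β δ₁ (t + 2) x ≤
      max (δ₂ - δ₁ + β * (V k E α β δ₂ (t + 1) (x - 1) - V k E α β δ₁ (t + 1) (x - 1)))
        (β * (V k E α β δ₂ (t + 1) (x - k) - V k E α β δ₁ (t + 1) (x - k))) := by
  rw [V_add_two, V_add_two]
  exact (max_sub_max_le_max _ _ _ _).trans_eq (by congr 1 <;> ring)

theorem le_V_add_two_sub (δ₁ δ₂ : ℝ) (t x : ℕ) :
    min (δ₂ - δ₁ + β * (V k E α β δ₂ (t + 1) (x - 1) - V k E α β δ₁ (t + 1) (x - 1)))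
        (β * (V k E α β δ₂ (t + 1) (x - k) - V k E α β δ₁ (t + 1) (x - k))) ≤
      V k E α β δ₂ (t + 2) x - V k E α β δ₁ (t + 2) x := by
  rw [V_add_two, V_add_two]
  exact le_of_eq_of_le (by congr 1 <;> ring) (min_sub_le_max_sub_max _ _ _ _)

theorem V_sub_V_sub_le (hβ0 : 0 ≤ β) (hβ1 : β ≤ 1) (hδ : δ₁ ≤ δ₂) :
    ∀ t x : ℕ, V k E α β δ₂ t (x - k) - V k E α β δ₁ t (x - k) ≤
      V k E α β δ₂ t (x - 1) - V k E α β δ₁ t (x - 1) + (δ₂ - δ₁)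
  | 0, _ => by simp only [V, sub_self, zero_add, sub_nonneg, hδ]
  | 1, x => by linarith [V_one_mono k E α β hδ (x - 1), V_one_sub_le k E α β hδ (x - k)]
  | t + 2, x => by
      have ih₁ := mul_le_mul_of_nonneg_left (V_sub_V_sub_le hβ0 hβ1 hδ (t + 1) (x - 1)) hβ0
      have ih₂ := mul_le_mul_of_nonneg_left (V_sub_V_sub_le hβ0 hβ1 hδ (t + 1) (x - k)) hβ0
      have upper := V_add_two_sub_le k E α β δ₁ δ₂ t (x - k)
      have lower := le_V_add_two_sub k E α β δ₁ δ₂ t (x - 1)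
      rw [show x - k - 1 = x - 1 - k by omega] at ih₂ upper
      have hβd : β * (δ₂ - δ₁) ≤ δ₂ - δ₁ := mul_le_of_le_one_left (sub_nonneg.mpr hδ) hβ1
      refine upper.trans (le_trans ?_ (add_le_add lower le_rfl))
      refine max_le ?_ ?_ <;> rw [← sub_le_iff_le_add] <;> refine le_min ?_ ?_ <;> linarith

theorem g_monotone (hβ0 : 0 ≤ β) (hβ1 : β ≤ 1) :
    ∀ τ b : ℕ, Monotone fun δ => g k E α β δ τ b
  | 0, _ => fun _ _ _ => le_rfl
  | 1, 0 => fun _ _ hδ => hδ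
  | 1, _ + 1 => fun _ _ hδ => by simp only [g]; linarith
  | t + 2, b => fun δ₁ δ₂ hδ => by
      have hV := mul_le_mul_of_nonneg_left (V_sub_V_sub_le k E α β hβ0 hβ1 hδ (t + 1) b) hβ0
      have hβd : β * (δ₂ - δ₁) ≤ δ₂ - δ₁ := mul_le_of_le_one_left (sub_nonneg.mpr hδ) hβ1
      simp only [g]
      linarith

end

theorem passive_set_monotone_general (k : ℕ) (E α β : ℝ)
    (hβ0 : 0 < β) (hβ1 : β < 1)
    (τ b : ℕ) (δ₁ δ₂ : ℝ) (hδ : δ₁ ≤ δ₂)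
    (h1 : 0 ≤ g k E α β δ₁ τ b) :
    0 ≤ g k E α β δ₂ τ b :=
  h1.trans (g_monotone k E α β hβ0.le hβ1.le τ b hδ)

theorem passive_set_monotone (k : ℕ) (hk : 1 ≤ k) (E α β : ℝ) (hE : 0 ≤ E) (hα : 0 < α)
    (hβ0 : 0 < β) (hβ1 : β < 1)
    (τ b : ℕ) (hτ : 1 ≤ τ) (δ₁ δ₂ : ℝ) (hδ : δ₁ ≤ δ₂)
    (h1 : 0 ≤ g k E α β δ₁ τ b) :
    0 ≤ g k E α β δ₂ τ b :=
  passive_set_monotone_general k E α β hβ0 hβ1 τ b δ₁ δ₂ hδ h1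
end

section
/- Slope bound for the value function in the subsidy (piecewise-linearity with bounded slopes): for all integers τ ≥ 1, b ≥ 0 and all reals δ₁ ≤ δ₂, one has 0 ≤ V_{δ₂}(τ,b) − V_{δ₁}(τ,b) ≤ (∑_{i=0}^{τ−1} β^i)·(δ₂ − δ₁) = ((1 − β^τ)/(1 − β))·(δ₂ − δ₁). -/
/-!
Both bounds follow by induction on `τ` along the recursion defining `V`. Each step takes a
maximum of two branches; the subsidy `δ` enters the passive branch once, undiscounted, and
both branches inherit the inductive bound on `V (τ - 1)` scaled by `β`. Since `max` is monotone
and commutes with adding a constant, the slope bound `S τ = ∑_{i<τ} β ^ i` satisfies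
`S (τ + 1) = 1 + β * S τ`.
-/

theorem max_le_max_add {α : Type*} [LinearOrder α] [Add α] [AddRightMono α]
    {a₁ a₂ c₁ c₂ M : α} (ha : a₂ ≤ a₁ + M) (hc : c₂ ≤ c₁ + M) :
    max a₂ c₂ ≤ max a₁ c₁ + M :=
  (max_le_max ha hc).trans_eq (max_add_add_right a₁ c₁ M)

section

variable {k : ℕ} {E α β : ℝ}

theorem V_mono_subsidy (hβ : 0 ≤ β) {δ₁ δ₂ : ℝ} (hδ : δ₁ ≤ δ₂) (τ b : ℕ) :
    V k E α β δ₁ τ b ≤ V k E α β δ₂ τ b := by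
  induction τ, b using V.induct k with
  | case1 => simp only [V, le_refl]
  | case2 => exact max_le_max_right 0 hδ
  | case3 => exact max_le_max_right _ (sub_le_sub_right hδ _)
  | case4 t b ih₁ ih_k =>
    exact max_le_max (add_le_add hδ (mul_le_mul_of_nonneg_left ih₁ hβ))
      (add_le_add_right (mul_le_mul_of_nonneg_left ih_k hβ) _)

theorem V_le_add_geom_sum_mul (hβ : 0 ≤ β) {δ₁ δ₂ : ℝ} (hδ : δ₁ ≤ δ₂) (τ b : ℕ) :
    V k E α β δ₂ τ b ≤ V k E α β δ₁ τ b + (∑ i ∈ Finset.range τ, β ^ i) * (δ₂ - δ₁) := by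
  have hd : 0 ≤ δ₂ - δ₁ := sub_nonneg.mpr hδ
  induction τ, b using V.induct k with
  | case1 => simp [V]
  | case2 =>
    simp only [V, Finset.range_one, Finset.sum_singleton, pow_zero, one_mul]
    exact max_le_max_add (by linarith) (by linarith)
  | case3 =>
    simp only [V, Finset.range_one, Finset.sum_singleton, pow_zero, one_mul]
    exact max_le_max_add (by linarith) (by linarith)
  | case4 t b ih₁ ih_k =>
    have hβ₁ := mul_le_mul_of_nonneg_left ih₁ hβ
    have hβ_k := mul_le_mul_of_nonneg_left ih_k hβ
    rw [geom_sum_succ]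
    simp only [V]
    exact max_le_max_add (by linarith) (by linarith)

end

theorem value_slope_bound_general (k : ℕ) (E α β : ℝ)
    (hβ0 : 0 < β) (hβ1 : β < 1)
    (τ b : ℕ) (δ₁ δ₂ : ℝ) (hδ : δ₁ ≤ δ₂) :
    0 ≤ V k E α β δ₂ τ b - V k E α β δ₁ τ b ∧
    V k E α β δ₂ τ b - V k E α β δ₁ τ b
      ≤ (∑ i ∈ Finset.range τ, β ^ i) * (δ₂ - δ₁) ∧
    (∑ i ∈ Finset.range τ, β ^ i) * (δ₂ - δ₁)
      = ((1 - β ^ τ) / (1 - β)) * (δ₂ - δ₁) := by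
  refine ⟨sub_nonneg.mpr (V_mono_subsidy hβ0.le hδ τ b),
    sub_le_iff_le_add'.mpr (V_le_add_geom_sum_mul hβ0.le hδ τ b), ?_⟩
  rw [geom_sum_eq hβ1.ne, ← neg_div_neg_eq, neg_sub, neg_sub]

theorem value_slope_bound (k : ℕ) (hk : 1 ≤ k) (E α β : ℝ) (hE : 0 ≤ E) (hα : 0 < α)
    (hβ0 : 0 < β) (hβ1 : β < 1)
    (τ b : ℕ) (hτ : 1 ≤ τ) (δ₁ δ₂ : ℝ) (hδ : δ₁ ≤ δ₂) :
    0 ≤ V k E α β δ₂ τ b - V k E α β δ₁ τ b ∧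
    V k E α β δ₂ τ b - V k E α β δ₁ τ b
      ≤ (∑ i ∈ Finset.range τ, β ^ i) * (δ₂ - δ₁) ∧
    (∑ i ∈ Finset.range τ, β ^ i) * (δ₂ - δ₁)
      = ((1 - β ^ τ) / (1 - β)) * (δ₂ - δ₁) :=
  value_slope_bound_general k E α β hβ0 hβ1 τ b δ₁ δ₂ hδ
end

section
/- Closed-form Whittle index (Theorem 2): for every integer τ ≥ 1 and integer b ≥ 0, the Whittle index satisfies: ω(τ,0) = 0; ω(τ,b) = E if 1 ≤ b ≤ (τ−1)·k + 1; ω(τ,b) = E + β^{τ−1}·α·(b − k·τ + k − 1)² if k·τ − k + 2 ≤ b ≤ k·τ; and ω(τ,b) = E + β^{τ−1}·α·( (b − k·τ + k − 1)² − (b − k·τ)² ) if b ≥ k·τ + 1. -/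
/-!
Write `cont t b` for `β · V (t, b)`, so that for `b ≥ 1` the gap at horizon `t + 1` is
`δ - E + cont t (b - 1) - cont t (b - k)`. When `b > k t + 1` the deadline is tight: for every
subsidy up to the threshold `E + β ^ t (F (b - 1 - k t) - F (b - k - k t))` it is optimal to be
active in every remaining slot, and then the gap is the subsidy minus the threshold. The
induction behind this needs the threshold not to increase along either transition, which follows
from `β ≤ 1` and the convexity of `F`. When `b ≤ k t + 1` the deadline is slack: for `δ ≤ E` it
is optimal to be active for the `⌈b / k⌉` slots the backlog needs and idle afterwards, so the
`k - 1` extra subtasks of the passive branch cost at most one active slot. The gap is then at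
most `δ - E + β (E - max δ 0) < 0`, and it vanishes at `δ = E`.
-/

open Finset

lemma Nat.sub_ceilDiv_add_one {c k : ℕ} (hk : 0 < k) (hc : 0 < c) :
    (c - k) ⌈/⌉ k + 1 = c ⌈/⌉ k := by
  rw [Nat.ceilDiv_eq_add_pred_div, Nat.ceilDiv_eq_add_pred_div]
  rcases le_total k c with h | h
  · rw [show c - k + k - 1 = c - 1 by omega, show c + k - 1 = c - 1 + k by omega,
      Nat.add_div_right _ hk]
  · rw [Nat.sub_eq_zero_of_le h, Nat.div_eq_of_lt (by omega),
      Nat.div_eq_of_lt_le (k := 1) (by omega) (by omega)]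

lemma Nat.ceilDiv_eq_succ_of_lt_of_le {c k t : ℕ} (hk : 0 < k) (h₁ : k * t < c)
    (h₂ : c ≤ k * (t + 1)) : c ⌈/⌉ k = t + 1 :=
  le_antisymm ((ceilDiv_le_iff_le_mul hk).2 h₂)
    (Nat.succ_le_of_lt (lt_of_not_ge fun h => (ceilDiv_le_iff_le_mul hk).1 h |>.not_gt h₁))

lemma geom_sum_le_geom_sum_add_one {β : ℝ} (hβ0 : 0 ≤ β) (hβ1 : β ≤ 1) {m n : ℕ}
    (h : m ≤ n + 1) : ∑ i ∈ range m, β ^ i ≤ ∑ i ∈ range n, β ^ i + 1 :=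
  calc ∑ i ∈ range m, β ^ i ≤ ∑ i ∈ range (n + 1), β ^ i :=
        sum_le_sum_of_subset_of_nonneg (range_subset_range.2 h) fun i _ _ => pow_nonneg hβ0 i
    _ ≤ ∑ i ∈ range n, β ^ i + 1 := by
        rw [geom_sum_succ']; linarith [pow_le_one₀ hβ0 hβ1 (n := n)]

namespace DeadlineArm

variable {k t b c : ℕ} {E α β δ : ℝ}

lemma F_monotone (hα : 0 ≤ α) : Monotone (F α) := fun m n h => by
  unfold F; gcongr

lemma F_sub_F_tsub_le (hα : 0 ≤ α) (n d : ℕ) :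
    F α n - F α (n - d) ≤ F α (n + d) - F α n := by
  unfold F
  rcases le_total d n with h | h
  · rw [Nat.cast_sub h]; push_cast
    nlinarith [mul_nonneg hα (sq_nonneg (d : ℝ))]
  · rw [Nat.sub_eq_zero_of_le h]; push_cast
    have hnd : (n : ℝ) ≤ d := by exact_mod_cast h
    nlinarith [mul_nonneg hα (mul_nonneg (Nat.cast_nonneg (α := ℝ) n) (sub_nonneg.2 hnd)),
      mul_nonneg hα (sq_nonneg (d : ℝ))]

/-- `β · V (t, b)`, and the terminal penalty at `t = 0`: with it, `V` and `g` obey one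
recursion at every horizon (`V_succ`, `g_succ`). -/
noncomputable def cont (k : ℕ) (E α β δ : ℝ) : ℕ → ℕ → ℝ
  | 0, b => -F α b
  | t + 1, b => β * V k E α β δ (t + 1) b

lemma V_succ (t b : ℕ) :
    V k E α β δ (t + 1) b =
      max (δ + cont k E α β δ t (b - 1))
        ((if 1 ≤ b then E else 0) + cont k E α β δ t (b - k)) := by
  rcases t with _ | t
  · rcases b with _ | b
    · simp [V, cont, F]
    · simp [V, cont, sub_eq_add_neg]
  · rfl

lemma g_succ (t b : ℕ) :
    g k E α β δ (t + 1) b =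
      δ + cont k E α β δ t (b - 1)
        - ((if 1 ≤ b then E else 0) + cont k E α β δ t (b - k)) := by
  rcases t with _ | t
  · rcases b with _ | b
    · simp [g, cont, F]
    · simp [g, cont]; ring
  · simp only [g, cont]; ring

lemma V_succ_of_g_nonpos (h : g k E α β δ (t + 1) b ≤ 0) :
    V k E α β δ (t + 1) b = (if 1 ≤ b then E else 0) + cont k E α β δ t (b - k) := by
  rw [g_succ] at h
  rw [V_succ, max_eq_right (by linarith)]

/-- The Whittle index of the state `(t + 1, b)` for `b ≥ 1`; the truncated subtractions make
this one expression cover the last three cases of the theorem. -/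
noncomputable def indexFormula (k : ℕ) (E α β : ℝ) (t b : ℕ) : ℝ :=
  E + β ^ t * (F α (b - 1 - k * t) - F α (b - k - k * t))

lemma le_indexFormula (hk : 1 ≤ k) (hα : 0 ≤ α) (hβ0 : 0 ≤ β) :
    E ≤ indexFormula k E α β t b := by
  have hF : F α (b - k - k * t) ≤ F α (b - 1 - k * t) := F_monotone hα (by omega)
  unfold indexFormula
  nlinarith [pow_nonneg hβ0 t]

lemma indexFormula_eq_of_le (hk : 1 ≤ k) (hb : b ≤ k * t + 1) :
    indexFormula k E α β t b = E := by
  simp [indexFormula, Nat.sub_eq_zero_of_le (by omega : b - 1 ≤ k * t),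
    Nat.sub_eq_zero_of_le (by omega : b - k ≤ k * t)]

lemma indexFormula_eq (hb : k * t + 1 ≤ b) :
    indexFormula k E α β t b =
      E + β ^ t * α * (((b : ℝ) - k * t - 1) ^ 2 - ((b - k - k * t : ℕ) : ℝ) ^ 2) := by
  rw [indexFormula, F, F, Nat.sub_sub, Nat.cast_sub (by omega)]
  push_cast
  ring

lemma indexFormula_succ_le_sub (hk : 1 ≤ k) (hα : 0 ≤ α) (hβ0 : 0 ≤ β) (hβ1 : β ≤ 1) :
    indexFormula k E α β (t + 1) b ≤ indexFormula k E α β t (b - k) := by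
  have hkt : k * (t + 1) = k * t + k := by ring
  have hD : 0 ≤ F α (b - k - 1 - k * t) - F α (b - k - k - k * t) :=
    sub_nonneg.2 (F_monotone hα (by omega))
  have hpow := pow_le_pow_of_le_one hβ0 hβ1 (Nat.le_add_right t 1)
  unfold indexFormula
  rw [show b - 1 - k * (t + 1) = b - k - 1 - k * t by omega,
    show b - k - k * (t + 1) = b - k - k - k * t by omega]
  nlinarith [mul_le_mul_of_nonneg_right hpow hD]

lemma indexFormula_succ_le_sub_one (hk : 1 ≤ k) (hα : 0 ≤ α) (hβ0 : 0 ≤ β) (hβ1 : β ≤ 1)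
    (hb : k * (t + 1) + 1 ≤ b) :
    indexFormula k E α β (t + 1) b ≤ indexFormula k E α β t (b - 1) := by
  have hkt : k * (t + 1) = k * t + k := by ring
  obtain ⟨n, rfl⟩ : ∃ n, b = k * t + k + 1 + n := ⟨b - (k * t + k + 1), by omega⟩
  have hD : 0 ≤ F α n - F α (n - (k - 1)) := sub_nonneg.2 (F_monotone hα (by omega))
  have hpow := pow_le_pow_of_le_one hβ0 hβ1 (Nat.le_add_right t 1)
  unfold indexFormula
  rw [hkt, show k * t + k + 1 + n - 1 - (k * t + k) = n by omega,
    show k * t + k + 1 + n - k - (k * t + k) = n - (k - 1) by omega,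
    show k * t + k + 1 + n - 1 - 1 - k * t = n + (k - 1) by omega,
    show k * t + k + 1 + n - 1 - k - k * t = n by omega]
  calc E + β ^ (t + 1) * (F α n - F α (n - (k - 1)))
      ≤ E + β ^ t * (F α n - F α (n - (k - 1))) := by
        nlinarith [mul_le_mul_of_nonneg_right hpow hD]
    _ ≤ E + β ^ t * (F α (n + (k - 1)) - F α n) := by
        linarith [mul_le_mul_of_nonneg_left (F_sub_F_tsub_le hα n (k - 1)) (pow_nonneg hβ0 t)]

/-- The value of `cont` when the arm is active in every remaining slot. -/
noncomputable def tightCont (k : ℕ) (E α β : ℝ) (t c : ℕ) : ℝ :=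
  E * β * ∑ i ∈ range t, β ^ i - β ^ t * F α (c - k * t)

lemma g_succ_of_tight (hb : 1 ≤ b)
    (hpass : cont k E α β δ t (b - 1) = tightCont k E α β t (b - 1))
    (hact : cont k E α β δ t (b - k) = tightCont k E α β t (b - k)) :
    g k E α β δ (t + 1) b = δ - indexFormula k E α β t b := by
  rw [g_succ, hpass, hact, if_pos hb]
  unfold tightCont indexFormula
  ring

lemma cont_succ_of_tight (hb : 1 ≤ b)
    (hpass : cont k E α β δ t (b - 1) = tightCont k E α β t (b - 1))
    (hact : cont k E α β δ t (b - k) = tightCont k E α β t (b - k))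
    (hδ : δ ≤ indexFormula k E α β t b) :
    cont k E α β δ (t + 1) b = tightCont k E α β (t + 1) b := by
  have hg : g k E α β δ (t + 1) b ≤ 0 := by
    rw [g_succ_of_tight hb hpass hact]; linarith
  rw [cont, V_succ_of_g_nonpos hg, hact, if_pos hb]
  unfold tightCont
  rw [show b - k * (t + 1) = b - k - k * t by rw [Nat.sub_sub, mul_add_one, add_comm],
    geom_sum_succ]
  ring

lemma cont_eq_tightCont (hk : 1 ≤ k) (hα : 0 ≤ α) (hβ0 : 0 ≤ β) (hβ1 : β ≤ 1) :
    ∀ t b, k * t + 1 ≤ b → δ ≤ indexFormula k E α β t b →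
      cont k E α β δ t (b - 1) = tightCont k E α β t (b - 1) ∧
        cont k E α β δ t (b - k) = tightCont k E α β t (b - k)
  | 0, b, _, _ => by simp [cont, tightCont]
  | t + 1, b, hb, hδ => by
    have hkt : k * (t + 1) = k * t + k := by ring
    have hδpass := hδ.trans (indexFormula_succ_le_sub_one hk hα hβ0 hβ1 hb)
    have hδact := hδ.trans (indexFormula_succ_le_sub hk hα hβ0 hβ1 (b := b))
    obtain ⟨hpass, hpass'⟩ := cont_eq_tightCont hk hα hβ0 hβ1 t (b - 1) (by omega) hδpass
    obtain ⟨hact, hact'⟩ := cont_eq_tightCont hk hα hβ0 hβ1 t (b - k) (by omega) hδact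
    exact ⟨cont_succ_of_tight (by omega) hpass hpass' hδpass,
      cont_succ_of_tight (by omega) hact hact' hδact⟩

lemma g_succ_of_le_indexFormula (hk : 1 ≤ k) (hα : 0 ≤ α) (hβ0 : 0 ≤ β) (hβ1 : β ≤ 1)
    (hb : k * t + 1 ≤ b) (hδ : δ ≤ indexFormula k E α β t b) :
    g k E α β δ (t + 1) b = δ - indexFormula k E α β t b :=
  let ⟨hpass, hact⟩ := cont_eq_tightCont hk hα hβ0 hβ1 t b hb hδ
  g_succ_of_tight (by omega) hpass hact

lemma cont_succ_eq_tightCont (hk : 1 ≤ k) (hα : 0 ≤ α) (hβ0 : 0 ≤ β) (hβ1 : β ≤ 1)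
    (hb : k * t + 1 ≤ b) (hδ : δ ≤ indexFormula k E α β t b) :
    cont k E α β δ (t + 1) b = tightCont k E α β (t + 1) b :=
  let ⟨hpass, hact⟩ := cont_eq_tightCont hk hα hβ0 hβ1 t b hb hδ
  cont_succ_of_tight (by omega) hpass hact hδ

/-- The value of `cont` when the arm is active for the `⌈c / k⌉` slots that clear the backlog
and idle afterwards, earning `max δ 0` per idle slot. -/
noncomputable def slackCont (k : ℕ) (E β δ : ℝ) (t c : ℕ) : ℝ :=
  β * (max δ 0 * ∑ i ∈ range t, β ^ i + (E - max δ 0) * ∑ i ∈ range (c ⌈/⌉ k), β ^ i)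

lemma slackCont_sub_le (hk : 1 ≤ k) (hb : 1 ≤ b) (hME : max δ 0 ≤ E) (hβ0 : 0 ≤ β)
    (hβ1 : β ≤ 1) :
    slackCont k E β δ t (b - 1) - slackCont k E β δ t (b - k) ≤ β * (E - max δ 0) := by
  have hceil : (b - 1) ⌈/⌉ k ≤ (b - k) ⌈/⌉ k + 1 := by
    rw [Nat.sub_ceilDiv_add_one hk hb, Nat.ceilDiv_eq_add_pred_div, Nat.ceilDiv_eq_add_pred_div]
    exact Nat.div_le_div_right (by omega)
  have hS := geom_sum_le_geom_sum_add_one hβ0 hβ1 hceil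
  have hEM : 0 ≤ E - max δ 0 := sub_nonneg.2 hME
  unfold slackCont
  nlinarith [mul_le_mul_of_nonneg_left hS (mul_nonneg hβ0 hEM)]

lemma g_succ_of_slack (hb : 1 ≤ b)
    (hpass : cont k E α β δ t (b - 1) = slackCont k E β δ t (b - 1))
    (hact : cont k E α β δ t (b - k) = slackCont k E β δ t (b - k)) :
    g k E α β δ (t + 1) b =
      δ - E + (slackCont k E β δ t (b - 1) - slackCont k E β δ t (b - k)) := by
  rw [g_succ, hpass, hact, if_pos hb]
  ring

lemma g_succ_le_of_slack (hk : 1 ≤ k) (hb : 1 ≤ b) (hME : max δ 0 ≤ E) (hβ0 : 0 ≤ β)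
    (hβ1 : β ≤ 1) (hpass : cont k E α β δ t (b - 1) = slackCont k E β δ t (b - 1))
    (hact : cont k E α β δ t (b - k) = slackCont k E β δ t (b - k)) :
    g k E α β δ (t + 1) b ≤ δ - E + β * (E - max δ 0) := by
  rw [g_succ_of_slack hb hpass hact]
  linarith [slackCont_sub_le (t := t) hk hb hME hβ0 hβ1]

lemma cont_succ_of_slack (hk : 1 ≤ k) (hME : max δ 0 ≤ E) (hβ0 : 0 ≤ β) (hβ1 : β ≤ 1)
    (hpass : cont k E α β δ t (c - 1) = slackCont k E β δ t (c - 1))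
    (hact : cont k E α β δ t (c - k) = slackCont k E β δ t (c - k)) :
    cont k E α β δ (t + 1) c = slackCont k E β δ (t + 1) c := by
  rcases Nat.eq_zero_or_pos c with rfl | (hc : 1 ≤ c)
  · simp only [Nat.zero_sub] at hpass
    rw [cont, V_succ, Nat.zero_sub, Nat.zero_sub, hpass, if_neg (by omega), max_add_add_right]
    simp only [slackCont, zero_ceilDiv, range_zero, sum_empty, geom_sum_succ]
    ring
  · have hg : g k E α β δ (t + 1) c ≤ 0 := by
      have := g_succ_le_of_slack hk hc hME hβ0 hβ1 hpass hact
      nlinarith [le_max_left δ 0, sub_nonneg.2 hME]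
    rw [cont, V_succ_of_g_nonpos hg, hact, if_pos hc]
    unfold slackCont
    rw [← Nat.sub_ceilDiv_add_one hk hc, geom_sum_succ, geom_sum_succ]
    ring

lemma cont_eq_slackCont (hk : 1 ≤ k) (hE : 0 ≤ E) (hα : 0 ≤ α) (hβ0 : 0 ≤ β) (hβ1 : β ≤ 1)
    (hδ : δ ≤ E) : ∀ t c, c ≤ k * t → cont k E α β δ t c = slackCont k E β δ t c
  | 0, c, hc => by
    obtain rfl : c = 0 := by simpa using hc
    simp [cont, slackCont, F]
  | t + 1, c, hc => by
    rcases le_or_gt c (k * t + 1) with hslack | htight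
    · exact cont_succ_of_slack hk (max_le hδ hE) hβ0 hβ1
        (cont_eq_slackCont hk hE hα hβ0 hβ1 hδ t (c - 1) (by omega))
        (cont_eq_slackCont hk hE hα hβ0 hβ1 hδ t (c - k) (by omega))
    · rw [cont_succ_eq_tightCont hk hα hβ0 hβ1 htight.le
        (hδ.trans (le_indexFormula hk hα hβ0))]
      unfold tightCont slackCont
      rw [Nat.ceilDiv_eq_succ_of_lt_of_le hk (by omega) hc, Nat.sub_eq_zero_of_le hc]
      simp only [F, CharP.cast_eq_zero]
      ring

lemma g_succ_le_of_le_mul_add_one (hk : 1 ≤ k) (hE : 0 ≤ E) (hα : 0 ≤ α) (hβ0 : 0 ≤ β)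
    (hβ1 : β ≤ 1) (hb₁ : 1 ≤ b) (hb : b ≤ k * t + 1) (hδ : δ ≤ E) :
    g k E α β δ (t + 1) b ≤ δ - E + β * (E - max δ 0) :=
  g_succ_le_of_slack hk hb₁ (max_le hδ hE) hβ0 hβ1
    (cont_eq_slackCont hk hE hα hβ0 hβ1 hδ t (b - 1) (by omega))
    (cont_eq_slackCont hk hE hα hβ0 hβ1 hδ t (b - k) (by omega))

lemma g_succ_self_eq_zero (hk : 1 ≤ k) (hE : 0 ≤ E) (hα : 0 ≤ α) (hβ0 : 0 ≤ β)
    (hβ1 : β ≤ 1) (hb₁ : 1 ≤ b) (hb : b ≤ k * t + 1) : g k E α β E (t + 1) b = 0 := by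
  rw [g_succ_of_slack hb₁ (cont_eq_slackCont hk hE hα hβ0 hβ1 le_rfl t (b - 1) (by omega))
    (cont_eq_slackCont hk hE hα hβ0 hβ1 le_rfl t (b - k) (by omega))]
  simp [slackCont, max_eq_left hE]

lemma whittle_eq_of_g_nonneg_of_g_neg {τ : ℕ} {w : ℝ} (hw : 0 ≤ g k E α β w τ b)
    (hlt : ∀ δ < w, g k E α β δ τ b < 0) : whittle k E α β τ b = w :=
  IsLeast.csInf_eq ⟨hw, fun δ hδ => not_lt.1 fun h => (hlt δ h).not_ge hδ⟩

lemma whittle_succ_zero (t : ℕ) : whittle k E α β (t + 1) 0 = 0 :=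
  whittle_eq_of_g_nonneg_of_g_neg (by simp [g_succ]) fun δ hδ => by simpa [g_succ] using hδ

lemma whittle_succ_eq_indexFormula (hk : 1 ≤ k) (hE : 0 ≤ E) (hα : 0 ≤ α) (hβ0 : 0 ≤ β)
    (hβ1 : β < 1) (hb : 1 ≤ b) : whittle k E α β (t + 1) b = indexFormula k E α β t b := by
  rcases le_or_gt b (k * t + 1) with hslack | htight
  · rw [indexFormula_eq_of_le hk hslack]
    refine whittle_eq_of_g_nonneg_of_g_neg
      (g_succ_self_eq_zero hk hE hα hβ0 hβ1.le hb hslack).ge fun δ hδ => ?_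
    have hg := g_succ_le_of_le_mul_add_one hk hE hα hβ0 hβ1.le hb hslack hδ.le
    rcases le_total δ 0 with h | h
    · rw [max_eq_right h] at hg; nlinarith
    · rw [max_eq_left h] at hg; nlinarith
  · refine whittle_eq_of_g_nonneg_of_g_neg ?_ fun δ hδ => ?_
    · rw [g_succ_of_le_indexFormula hk hα hβ0 hβ1.le htight.le le_rfl, sub_self]
    · rw [g_succ_of_le_indexFormula hk hα hβ0 hβ1.le htight.le hδ.le]; linarith

end DeadlineArm

open DeadlineArm in
theorem whittle_closed_form (k : ℕ) (hk : 1 ≤ k) (E α β : ℝ) (hE : 0 ≤ E) (hα : 0 < α)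
    (hβ0 : 0 < β) (hβ1 : β < 1)
    (τ : ℕ) (hτ : 1 ≤ τ) :
    whittle k E α β τ 0 = 0 ∧
    (∀ b : ℕ, 1 ≤ b → b ≤ (τ - 1) * k + 1 → whittle k E α β τ b = E) ∧
    (∀ b : ℕ, k * τ - k + 2 ≤ b → b ≤ k * τ → whittle k E α β τ b = E + β ^ (τ - 1) * α * ((b : ℝ) - k * τ + k - 1) ^ 2) ∧
    (∀ b : ℕ, k * τ + 1 ≤ b → whittle k E α β τ b = E + β ^ (τ - 1) * α * (((b : ℝ) - k * τ + k - 1) ^ 2 - ((b : ℝ) - k * τ) ^ 2)) := by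
  obtain ⟨t, rfl⟩ : ∃ t, τ = t + 1 := ⟨τ - 1, by omega⟩
  have hkt : k * (t + 1) = k * t + k := by ring
  have hW : ∀ b, 1 ≤ b → whittle k E α β (t + 1) b = indexFormula k E α β t b :=
    fun b => whittle_succ_eq_indexFormula hk hE hα.le hβ0.le hβ1
  simp only [Nat.add_sub_cancel]
  refine ⟨whittle_succ_zero t, fun b hb₁ hb => ?_, fun b hb₁ hb => ?_, fun b hb => ?_⟩
  · rw [hW b hb₁, indexFormula_eq_of_le hk (by rwa [mul_comm])]
  · rw [hW b (by omega), indexFormula_eq (by omega), Nat.sub_eq_zero_of_le (by omega)]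
    push_cast; ring
  · rw [hW b (by omega), indexFormula_eq (by omega), Nat.sub_sub, Nat.cast_sub (by omega)]
    push_cast; ring
end

section
/- Whittle index of comfortably finishable states (Theorem 2, second case): for every integer τ ≥ 1 and every integer b with 1 ≤ b ≤ (τ−1)·k + 1 (the task can be finished with at least one slot of slack), the Whittle index equals the per-slot energy saving: ω(τ,b) = E. -/
/-!
At the subsidy `δ = E` passivity pays as much as activity, so every state that can still be
finished in time is worth the full discounted stream `E (1 + β + ⋯ + β^(t-1))`; in the state
`(τ, b)` both successors `b - 1` and `b - k` are finishable in `τ - 1` slots, hence `g_E = 0`.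
For `δ < E` the key estimate is that, with `t` slots left and `b' ≤ t k`, at most `k - 1`
extra subtasks cost at most one slot's loss `E - δ`:
`V_δ(t, b') ≤ V_δ(t, b) + (E - δ)`. Applied to `b - k ≤ b - 1`, it gives
`g_δ(τ, b) ≤ (1 - β)(δ - E) < 0`, so `E` is the least subsidy making passivity optimal.
-/

open Finset

section ValueFunction

variable {k : ℕ} {E α β δ : ℝ}

lemma F_nonneg (hα : 0 ≤ α) (x : ℕ) : 0 ≤ F α x := by
  unfold F
  positivity

lemma F_monotone (hα : 0 ≤ α) : Monotone (F α) := fun x y hxy => by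
  unfold F
  gcongr

lemma V_one_of_pos (hα : 0 ≤ α) (hδ : δ ≤ E) {b : ℕ} (hb : 1 ≤ b) (hbk : b ≤ k) :
    V k E α β δ 1 b = E := by
  obtain ⟨b, rfl⟩ := Nat.exists_eq_add_of_le' hb
  rw [V, Nat.sub_eq_zero_of_le hbk, show F α 0 = 0 by simp [F], sub_zero]
  exact max_eq_right (by linarith [F_nonneg hα b])

lemma passive_le_V (t b : ℕ) :
    δ + β * V k E α β δ (t + 1) (b - 1) ≤ V k E α β δ (t + 2) b :=
  le_max_left _ _

lemma active_le_V {t b : ℕ} (hb : 1 ≤ b) :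
    E + β * V k E α β δ (t + 1) (b - k) ≤ V k E α β δ (t + 2) b := by
  rw [V, if_pos hb]
  exact le_max_right _ _

lemma V_le_geom (hE : 0 ≤ E) (hα : 0 ≤ α) (hβ : 0 ≤ β) (hδ : δ ≤ E) (t b : ℕ) :
    V k E α β δ (t + 1) b ≤ E * ∑ i ∈ range (t + 1), β ^ i := by
  induction t generalizing b with
  | zero =>
    rcases b with _ | b
    · simpa [V] using And.intro hδ hE
    · simp only [V, zero_add, range_one, sum_singleton, pow_zero, mul_one]
      exact max_le (by linarith [F_nonneg hα b]) (by linarith [F_nonneg hα (b + 1 - k)])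
  | succ t ih =>
    rw [V, geom_sum_succ]
    have h1 := mul_le_mul_of_nonneg_left (ih (b - 1)) hβ
    have h2 := mul_le_mul_of_nonneg_left (ih (b - k)) hβ
    refine max_le (by linarith) ?_
    split_ifs <;> linarith

lemma V_eq_geom_of_le (hE : 0 ≤ E) (hα : 0 ≤ α) (hβ : 0 ≤ β) (t : ℕ) {b : ℕ}
    (hb : b ≤ (t + 1) * k) :
    V k E α β E (t + 1) b = E * ∑ i ∈ range (t + 1), β ^ i := by
  refine le_antisymm (V_le_geom hE hα hβ le_rfl t b) ?_
  induction t generalizing b with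
  | zero =>
    rcases Nat.eq_zero_or_pos b with rfl | hb1
    · simp [V]
    · rw [V_one_of_pos hα le_rfl hb1 (by simpa using hb)]
      simp
  | succ t ih =>
    have hstep : ∀ b', b' ≤ (t + 1) * k →
        E * ∑ i ∈ range (t + 2), β ^ i ≤ E + β * V k E α β E (t + 1) b' := fun b' hb' => by
      rw [geom_sum_succ]
      nlinarith [ih hb']
    rcases Nat.eq_zero_or_pos b with rfl | hb1
    · exact (hstep 0 (Nat.zero_le _)).trans (passive_le_V t 0)
    · refine (hstep (b - k) ?_).trans (active_le_V hb1)
      rw [add_one_mul (t + 1)] at hb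
      omega

lemma V_antitoneOn_Ici (hk : 1 ≤ k) (hα : 0 ≤ α) (hβ : 0 ≤ β) (t : ℕ) :
    AntitoneOn (V k E α β δ (t + 1)) (Set.Ici (t * k + 2)) := by
  induction t with
  | zero =>
    intro m hm m' hm' hmm'
    simp only [zero_mul, zero_add, Set.mem_Ici] at hm hm'
    obtain ⟨m, rfl⟩ := Nat.exists_eq_add_of_le' (one_le_two.trans hm)
    obtain ⟨m', rfl⟩ := Nat.exists_eq_add_of_le' (one_le_two.trans hm')
    have h1 := F_monotone hα (Nat.le_of_succ_le_succ hmm')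
    have h2 := F_monotone hα (Nat.sub_le_sub_right hmm' k)
    exact max_le_max (by linarith) (by linarith)
  | succ t ih =>
    intro m hm m' hm' hmm'
    simp only [Set.mem_Ici, add_one_mul t] at hm hm'
    rw [V, V, if_pos (by omega), if_pos (by omega)]
    have h1 := ih (a := m - 1) (b := m' - 1) (Set.mem_Ici.2 (by omega))
      (Set.mem_Ici.2 (by omega)) (by omega)
    have h2 := ih (a := m - k) (b := m' - k) (Set.mem_Ici.2 (by omega))
      (Set.mem_Ici.2 (by omega)) (by omega)
    exact max_le_max (by gcongr) (by gcongr)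

lemma V_one_le_V_one_add (hα : 0 ≤ α) (hδ : δ ≤ E) {b b' : ℕ} (hbb' : b ≤ b') (hb' : b' ≤ k) :
    V k E α β δ 1 b' ≤ V k E α β δ 1 b + (E - δ) := by
  rcases Nat.eq_zero_or_pos b' with rfl | hb'1
  · obtain rfl : b = 0 := by omega
    linarith
  rw [V_one_of_pos hα hδ hb'1 hb']
  rcases Nat.eq_zero_or_pos b with rfl | hb1
  · simp only [V]
    linarith [le_max_left δ 0]
  · rw [V_one_of_pos hα hδ hb1 (by omega)]
    linarith

lemma V_le_V_add_sub (hk : 1 ≤ k) (hα : 0 ≤ α) (hβ0 : 0 ≤ β) (hβ1 : β ≤ 1) (hδ : δ ≤ E)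
    (t : ℕ) {b b' : ℕ} (hbb' : b ≤ b') (hb'b : b' ≤ b + (k - 1)) (hb' : b' ≤ (t + 1) * k) :
    V k E α β δ (t + 1) b' ≤ V k E α β δ (t + 1) b + (E - δ) := by
  have hc : 0 ≤ E - δ := sub_nonneg.2 hδ
  induction t generalizing b b' with
  | zero => exact V_one_le_V_one_add hα hδ hbb' (by simpa using hb')
  | succ t ih =>
    rcases Nat.eq_zero_or_pos b' with rfl | hb'1
    · obtain rfl : b = 0 := by omega
      linarith
    rw [add_one_mul (t + 1)] at hb'
    have hactive : E + β * V k E α β δ (t + 1) (b' - k) ≤ V k E α β δ (t + 2) b + (E - δ) := by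
      rcases Nat.eq_zero_or_pos b with rfl | hb1
      · rw [Nat.sub_eq_zero_of_le (by omega)]
        calc E + β * V k E α β δ (t + 1) 0 = δ + β * V k E α β δ (t + 1) (0 - 1) + (E - δ) := by
              simp only [zero_tsub]; ring
          _ ≤ V k E α β δ (t + 2) 0 + (E - δ) := add_le_add_left (passive_le_V t 0) _
      · have := ih (b := b - k) (b' := b' - k) (by omega) (by omega) (by omega)
        calc E + β * V k E α β δ (t + 1) (b' - k)
            ≤ E + β * V k E α β δ (t + 1) (b - k) + (E - δ) := by nlinarith
          _ ≤ V k E α β δ (t + 2) b + (E - δ) := add_le_add_left (active_le_V hb1) _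
    rw [V, if_pos (show 1 ≤ b' from hb'1)]
    refine max_le ?_ hactive
    rcases le_or_gt (b' - 1) ((t + 1) * k) with hfin | hover
    · have := ih (b := b - 1) (b' := b' - 1) (by omega) (by omega) hfin
      calc δ + β * V k E α β δ (t + 1) (b' - 1)
          ≤ δ + β * V k E α β δ (t + 1) (b - 1) + (E - δ) := by nlinarith
        _ ≤ V k E α β δ (t + 2) b + (E - δ) := add_le_add_left (passive_le_V t b) _
    · -- `b' - 1` cannot be finished in `t + 1` slots, where `V` is antitone, so activity wins
      rw [add_one_mul t] at hover
      have hmono : V k E α β δ (t + 1) (b' - 1) ≤ V k E α β δ (t + 1) (b' - k) :=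
        V_antitoneOn_Ici hk hα hβ0 t (Set.mem_Ici.2 (by omega)) (Set.mem_Ici.2 (by omega))
          (by omega)
      nlinarith

end ValueFunction

section Gap

variable {k : ℕ} {E α β : ℝ}

lemma g_one_one (hk : 1 ≤ k) (δ : ℝ) : g k E α β δ 1 1 = δ - E := by
  simp [g, F, Nat.sub_eq_zero_of_le hk]

lemma g_succ_succ_of_pos {δ : ℝ} {t b : ℕ} (hb : 1 ≤ b) :
    g k E α β δ (t + 2) b =
      δ - E + β * (V k E α β δ (t + 1) (b - 1) - V k E α β δ (t + 1) (b - k)) := by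
  rw [g, if_pos hb]
  ring

lemma isLeast_g_one_one_nonneg (hk : 1 ≤ k) : IsLeast {δ | 0 ≤ g k E α β δ 1 1} E := by
  simp only [g_one_one hk, sub_nonneg]
  exact isLeast_Ici

lemma isLeast_g_succ_succ_nonneg (hk : 1 ≤ k) (hE : 0 ≤ E) (hα : 0 ≤ α) (hβ0 : 0 ≤ β)
    (hβ1 : β < 1) {t b : ℕ} (hb1 : 1 ≤ b) (hb2 : b ≤ (t + 1) * k + 1) :
    IsLeast {δ | 0 ≤ g k E α β δ (t + 2) b} E := by
  refine ⟨?_, fun δ hδ => ?_⟩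
  · rw [Set.mem_ofPred_eq, g_succ_succ_of_pos hb1, V_eq_geom_of_le hE hα hβ0 t (by omega),
      V_eq_geom_of_le hE hα hβ0 t (b := b - k) (by omega)]
    simp
  · by_contra! hδE
    have := V_le_V_add_sub hk hα hβ0 hβ1.le hδE.le t (b := b - k) (b' := b - 1)
      (by omega) (by omega) (by omega)
    rw [Set.mem_ofPred_eq, g_succ_succ_of_pos hb1] at hδ
    nlinarith

end Gap

theorem whittle_comfortable (k : ℕ) (hk : 1 ≤ k) (E α β : ℝ) (hE : 0 ≤ E) (hα : 0 < α)
    (hβ0 : 0 < β) (hβ1 : β < 1)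
    (τ b : ℕ) (hτ : 1 ≤ τ) (hb1 : 1 ≤ b) (hb2 : b ≤ (τ - 1) * k + 1) :
    whittle k E α β τ b = E := by
  obtain ⟨t, rfl⟩ := Nat.exists_eq_add_of_le' hτ
  rcases t with _ | t
  · obtain rfl : b = 1 := by simp at hb2; omega
    exact (isLeast_g_one_one_nonneg hk).csInf_eq
  · exact (isLeast_g_succ_succ_nonneg hk hE hα.le hβ0.le hβ1 hb1 (by simpa using hb2)).csInf_eq
end

section
/- Whittle index of unfinishable states (Theorem 2, fourth case): for every integer τ ≥ 1 and every integer b with b ≥ k·τ + 1 (the task cannot be finished even by offloading in every remaining slot), the Whittle index is ω(τ,b) = E + β^{τ−1}·α·( (b − k·τ + k − 1)² − (b − k·τ)² ). -/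
theorem csInf_setOf_nonneg_eq_of_eq_sub {f : ℝ → ℝ} {w : ℝ} (hf : ∀ δ ≤ w, f δ = δ - w) :
    sInf {δ | 0 ≤ f δ} = w := by
  refine IsLeast.csInf_eq ⟨by simp [hf w le_rfl], fun δ (hδ : 0 ≤ f δ) => ?_⟩
  by_contra! hlt
  linarith [hf δ hlt.le]

def shortfall (k τ b : ℕ) : ℝ := b - k * τ

def penaltyGap (k : ℕ) (d : ℝ) : ℝ := (d + k - 1) ^ 2 - d ^ 2

def threshold (k : ℕ) (E α β : ℝ) (τ b : ℕ) : ℝ :=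
  E + β ^ (τ - 1) * α * penaltyGap k (shortfall k τ b)

def alwaysActiveValue (k : ℕ) (E α β : ℝ) (τ b : ℕ) : ℝ :=
  E * ∑ i ∈ Finset.range τ, β ^ i - β ^ (τ - 1) * α * shortfall k τ b ^ 2

section

variable {k τ b : ℕ}

theorem shortfall_sub_one (hb : 1 ≤ b) :
    shortfall k τ (b - 1) = shortfall k (τ + 1) b + k - 1 := by
  simp only [shortfall]; push_cast [Nat.cast_sub hb]; ring

theorem shortfall_sub_self (hb : k ≤ b) : shortfall k τ (b - k) = shortfall k (τ + 1) b := by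
  simp only [shortfall]; push_cast [Nat.cast_sub hb]; ring

theorem shortfall_pos (hb : k * τ < b) : 0 < shortfall k τ b := by
  have : ((k * τ : ℕ) : ℝ) < b := by exact_mod_cast hb
  simp only [shortfall]; push_cast at this; linarith

theorem penaltyGap_nonneg (hk : 1 ≤ k) {d : ℝ} (hd : 0 ≤ d) : 0 ≤ penaltyGap k d := by
  have : (1 : ℝ) ≤ k := by exact_mod_cast hk
  simp only [penaltyGap]; nlinarith

theorem penaltyGap_le_penaltyGap_add (hk : 1 ≤ k) (d : ℝ) :
    penaltyGap k d ≤ penaltyGap k (d + k - 1) := by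
  have : (1 : ℝ) ≤ k := by exact_mod_cast hk
  simp only [penaltyGap]; nlinarith

theorem lt_sub_one_and_lt_sub_self_of_mul_succ_lt (hk : 1 ≤ k) (hb : k * (τ + 1) < b) :
    1 ≤ b ∧ k ≤ b ∧ k * τ < b - 1 ∧ k * τ < b - k := by
  rw [Nat.mul_succ] at hb; omega

variable {E α β δ : ℝ}

theorem threshold_succ_le_of_lt (hk : 1 ≤ k) (hα : 0 ≤ α) (hβ0 : 0 ≤ β) (hβ1 : β ≤ 1)
    (hb : k * (τ + 2) < b) :
    threshold k E α β (τ + 2) b ≤ threshold k E α β (τ + 1) (b - k) ∧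
      threshold k E α β (τ + 2) b ≤ threshold k E α β (τ + 1) (b - 1) := by
  obtain ⟨hb1, hbk, -⟩ := lt_sub_one_and_lt_sub_self_of_mul_succ_lt hk hb
  have hd := (shortfall_pos hb).le
  have hc : 0 ≤ β ^ τ * α := by positivity
  have hgap := penaltyGap_nonneg hk hd
  have hgap_le :=
    mul_le_mul_of_nonneg_left (penaltyGap_le_penaltyGap_add hk (shortfall k (τ + 2) b)) hc
  have hdisc : β ^ τ * α * (β * penaltyGap k (shortfall k (τ + 2) b)) ≤
      β ^ τ * α * penaltyGap k (shortfall k (τ + 2) b) :=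
    mul_le_mul_of_nonneg_left (mul_le_of_le_one_left hgap hβ1) hc
  simp only [threshold, shortfall_sub_one hb1, shortfall_sub_self hbk, Nat.add_sub_cancel,
    Nat.add_succ_sub_one, pow_succ]
  constructor <;> linarith

theorem alwaysActiveValue_succ (hb : k ≤ b) :
    E + β * alwaysActiveValue k E α β (τ + 1) (b - k) = alwaysActiveValue k E α β (τ + 2) b := by
  simp only [alwaysActiveValue, shortfall_sub_self hb, Nat.add_sub_cancel, Nat.add_succ_sub_one,
    geom_sum_succ]
  ring

theorem passive_sub_active_eq (hb1 : 1 ≤ b) (hbk : k ≤ b) :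
    δ + β * alwaysActiveValue k E α β (τ + 1) (b - 1) -
        (E + β * alwaysActiveValue k E α β (τ + 1) (b - k)) =
      δ - threshold k E α β (τ + 2) b := by
  simp only [alwaysActiveValue, threshold, penaltyGap, shortfall_sub_one hb1,
    shortfall_sub_self hbk, Nat.add_sub_cancel, Nat.add_succ_sub_one]
  ring

theorem V_succ_succ (hb : 1 ≤ b) :
    V k E α β δ (τ + 2) b =
      max (δ + β * V k E α β δ (τ + 1) (b - 1)) (E + β * V k E α β δ (τ + 1) (b - k)) := by
  rw [V, if_pos hb]

theorem g_succ_succ (hb : 1 ≤ b) :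
    g k E α β δ (τ + 2) b =
      δ + β * V k E α β δ (τ + 1) (b - 1) - (E + β * V k E α β δ (τ + 1) (b - k)) := by
  rw [g, if_pos hb]; ring

theorem V_one_eq_alwaysActiveValue (hk : 1 ≤ k) (hb : k < b)
    (hδ : δ ≤ threshold k E α β 1 b) :
    V k E α β δ 1 b = alwaysActiveValue k E α β 1 b := by
  obtain ⟨c, rfl⟩ : ∃ c, b = c + 1 := ⟨b - 1, by omega⟩
  simp only [threshold, penaltyGap, shortfall] at hδ
  simp only [V, F, alwaysActiveValue, shortfall]
  push_cast [Nat.cast_sub hb.le] at hδ ⊢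
  rw [max_eq_right (by nlinarith)]
  simp

theorem g_one_eq_sub_threshold (hb : k < b) : g k E α β δ 1 b = δ - threshold k E α β 1 b := by
  obtain ⟨c, rfl⟩ : ∃ c, b = c + 1 := ⟨b - 1, by omega⟩
  simp only [g, F, threshold, penaltyGap, shortfall]
  push_cast [Nat.cast_sub hb.le]
  ring

theorem V_eq_alwaysActiveValue (hk : 1 ≤ k) (hα : 0 ≤ α) (hβ0 : 0 ≤ β) (hβ1 : β ≤ 1) :
    ∀ τ b, k * (τ + 1) < b → δ ≤ threshold k E α β (τ + 1) b →
      V k E α β δ (τ + 1) b = alwaysActiveValue k E α β (τ + 1) b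
  | 0, b, hb, hδ => V_one_eq_alwaysActiveValue hk (by simpa using hb) hδ
  | τ + 1, b, hb, hδ => by
    obtain ⟨hb1, hbk, hb_sub_one, hb_sub_self⟩ :=
      lt_sub_one_and_lt_sub_self_of_mul_succ_lt hk hb
    obtain ⟨hle_sub_self, hle_sub_one⟩ := threshold_succ_le_of_lt (E := E) hk hα hβ0 hβ1 hb
    rw [V_succ_succ hb1,
      V_eq_alwaysActiveValue hk hα hβ0 hβ1 τ (b - 1) hb_sub_one (hδ.trans hle_sub_one),
      V_eq_alwaysActiveValue hk hα hβ0 hβ1 τ (b - k) hb_sub_self (hδ.trans hle_sub_self),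
      max_eq_right (sub_nonpos.1 (by rw [passive_sub_active_eq hb1 hbk]; linarith)),
      alwaysActiveValue_succ hbk]

theorem g_eq_sub_threshold (hk : 1 ≤ k) (hα : 0 ≤ α) (hβ0 : 0 ≤ β) (hβ1 : β ≤ 1)
    (hτ : 1 ≤ τ) (hb : k * τ < b) (hδ : δ ≤ threshold k E α β τ b) :
    g k E α β δ τ b = δ - threshold k E α β τ b := by
  obtain ⟨τ, rfl⟩ : ∃ t, τ = t + 1 := ⟨τ - 1, by omega⟩
  rcases τ with _ | τ
  · exact g_one_eq_sub_threshold (by simpa using hb)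
  obtain ⟨hb1, hbk, hb_sub_one, hb_sub_self⟩ := lt_sub_one_and_lt_sub_self_of_mul_succ_lt hk hb
  obtain ⟨hle_sub_self, hle_sub_one⟩ := threshold_succ_le_of_lt (E := E) hk hα hβ0 hβ1 hb
  rw [g_succ_succ hb1,
    V_eq_alwaysActiveValue hk hα hβ0 hβ1 τ (b - 1) hb_sub_one (hδ.trans hle_sub_one),
    V_eq_alwaysActiveValue hk hα hβ0 hβ1 τ (b - k) hb_sub_self (hδ.trans hle_sub_self),
    passive_sub_active_eq hb1 hbk]

end

theorem whittle_unfinishable_general (k : ℕ) (hk : 1 ≤ k) (E α β : ℝ) (hα : 0 < α)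
    (hβ0 : 0 < β) (hβ1 : β < 1)
    (τ b : ℕ) (hτ : 1 ≤ τ) (hb : k * τ + 1 ≤ b) :
    whittle k E α β τ b = E + β ^ (τ - 1) * α * (((b : ℝ) - k * τ + k - 1) ^ 2 - ((b : ℝ) - k * τ) ^ 2) :=
  csInf_setOf_nonneg_eq_of_eq_sub fun δ (hδ : δ ≤ threshold k E α β τ b) =>
    g_eq_sub_threshold hk hα.le hβ0.le hβ1.le hτ hb hδ

theorem whittle_unfinishable (k : ℕ) (hk : 1 ≤ k) (E α β : ℝ) (hE : 0 ≤ E) (hα : 0 < α)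
    (hβ0 : 0 < β) (hβ1 : β < 1)
    (τ b : ℕ) (hτ : 1 ≤ τ) (hb : k * τ + 1 ≤ b) :
    whittle k E α β τ b = E + β ^ (τ - 1) * α * (((b : ℝ) - k * τ + k - 1) ^ 2 - ((b : ℝ) - k * τ) ^ 2) :=
  whittle_unfinishable_general k hk E α β hα hβ0 hβ1 τ b hτ hb
end

section
/- Case τ = 2 of the Whittle index (Appendix B): ω(2,0) = 0; ω(2,b) = E for every integer b with 1 ≤ b ≤ k + 1; ω(2,b) = E + β·α·(b − k − 1)² for every integer b with k + 2 ≤ b ≤ 2k; and ω(2,b) = E + β·α·( (b − k − 1)² − (b − 2k)² ) for every integer b ≥ 2k + 1. -/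
/-!
With one slot left, `V δ 1 x` has the form `max (δ + c₁) c₂`, so it is monotone and
1-Lipschitz in the subsidy `δ`. Hence the gap `g δ 2 b`, where `δ` enters once with
coefficient `1` and the two values `V δ 1 _` enter with weights `± β`, grows at rate at least
`1 - β > 0`, and the Whittle index `ω(2, b)` is its unique root. That root is found by guessing
that at `δ = ω(2, b)` the continuation values are those of the active action; the guess is
consistent because `x ↦ α x²` is monotone and convex.
-/

namespace Whittle

variable {k : ℕ} {E α β : ℝ}

@[simp]
lemma F_zero (α : ℝ) : F α 0 = 0 := by
  simp [F]

lemma F_nonneg (hα : 0 ≤ α) (x : ℕ) : 0 ≤ F α x := by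
  unfold F
  positivity

lemma F_mono (hα : 0 ≤ α) {x y : ℕ} (h : x ≤ y) : F α x ≤ F α y := by
  unfold F
  gcongr

lemma two_mul_F_le_F_add_add_F_sub (hα : 0 ≤ α) (m d : ℕ) :
    2 * F α m ≤ F α (m + d) + F α (m - d) := by
  rcases le_total d m with hdm | hmd
  · unfold F
    push_cast [hdm]
    nlinarith [sq_nonneg (d : ℝ)]
  · have hm : 2 * F α m ≤ F α (2 * m) := by
      unfold F
      push_cast
      nlinarith [sq_nonneg (m : ℝ)]
    linarith [F_mono hα (show 2 * m ≤ m + d by omega), F_nonneg hα (m - d)]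

lemma V_one_zero (δ : ℝ) : V k E α β δ 1 0 = max δ 0 := by
  rw [V]

lemma V_one_of_pos (δ : ℝ) {x : ℕ} (hx : 1 ≤ x) :
    V k E α β δ 1 x = max (δ - F α (x - 1)) (E - F α (x - k)) := by
  obtain ⟨s, rfl⟩ := Nat.exists_eq_add_of_le' hx
  rw [V, Nat.add_sub_cancel]

lemma V_one_eq_max_add (x : ℕ) : ∃ c₁ c₂ : ℝ, ∀ δ, V k E α β δ 1 x = max (δ + c₁) c₂ := by
  rcases Nat.eq_zero_or_pos x with rfl | hx
  · exact ⟨0, 0, fun δ => by rw [V_one_zero, add_zero]⟩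
  · exact ⟨-F α (x - 1), E - F α (x - k), fun δ => by rw [V_one_of_pos δ hx, sub_eq_add_neg]⟩

lemma V_one_mono {δ δ' : ℝ} (h : δ ≤ δ') (x : ℕ) :
    V k E α β δ 1 x ≤ V k E α β δ' 1 x ∧ V k E α β δ' 1 x ≤ V k E α β δ 1 x + (δ' - δ) := by
  obtain ⟨c₁, c₂, hV⟩ := V_one_eq_max_add (k := k) (E := E) (α := α) (β := β) x
  rw [hV, hV]
  exact ⟨max_le_max (by linarith) le_rfl,
    max_le (by linarith [le_max_left (δ + c₁) c₂]) (by linarith [le_max_right (δ + c₁) c₂])⟩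

lemma V_one_eq_active (δ : ℝ) {x : ℕ} (hx : 1 ≤ x) (h : δ - F α (x - 1) ≤ E - F α (x - k)) :
    V k E α β δ 1 x = E - F α (x - k) := by
  rw [V_one_of_pos δ hx, max_eq_right h]

lemma V_one_at_E (hE : 0 ≤ E) (hα : 0 ≤ α) {x : ℕ} (hx : x ≤ k) : V k E α β E 1 x = E := by
  rcases Nat.eq_zero_or_pos x with rfl | hx0
  · rw [V_one_zero, max_eq_left hE]
  · rw [V_one_eq_active E hx0] <;> simp [Nat.sub_eq_zero_of_le hx, F_nonneg hα]

lemma g_two (δ : ℝ) (b : ℕ) :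
    g k E α β δ 2 b = δ + β * V k E α β δ 1 (b - 1) - (if 1 ≤ b then E else 0)
      - β * V k E α β δ 1 (b - k) := by
  rw [g]

lemma sub_mul_le_g_two_sub (hβ : 0 ≤ β) {δ δ' : ℝ} (h : δ ≤ δ') (b : ℕ) :
    (1 - β) * (δ' - δ) ≤ g k E α β δ' 2 b - g k E α β δ 2 b := by
  rw [g_two, g_two]
  obtain ⟨h₁, -⟩ := V_one_mono (k := k) (E := E) (α := α) (β := β) h (b - 1)
  obtain ⟨-, h₂⟩ := V_one_mono (k := k) (E := E) (α := α) (β := β) h (b - k)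
  nlinarith [mul_le_mul_of_nonneg_left h₁ hβ, mul_le_mul_of_nonneg_left h₂ hβ]

lemma whittle_two_eq_of_g_eq_zero (hβ0 : 0 ≤ β) (hβ1 : β < 1) {ω : ℝ} {b : ℕ}
    (hω : g k E α β ω 2 b = 0) : whittle k E α β 2 b = ω := by
  have hset : {δ : ℝ | 0 ≤ g k E α β δ 2 b} = Set.Ici ω := by
    ext δ
    rw [Set.mem_ofPred_eq, Set.mem_Ici]
    constructor
    · intro hδ
      by_contra! hlt
      nlinarith [sub_mul_le_g_two_sub (k := k) (E := E) (α := α) hβ0 hlt.le b]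
    · intro hδ
      nlinarith [sub_mul_le_g_two_sub (k := k) (E := E) (α := α) hβ0 hδ b]
  rw [whittle, hset, csInf_Ici]

lemma whittle_two_zero (hβ0 : 0 ≤ β) (hβ1 : β < 1) : whittle k E α β 2 0 = 0 :=
  whittle_two_eq_of_g_eq_zero hβ0 hβ1 (by simp [g_two])

lemma whittle_two_of_le_succ (hk : 1 ≤ k) (hE : 0 ≤ E) (hα : 0 ≤ α) (hβ0 : 0 ≤ β)
    (hβ1 : β < 1) {b : ℕ} (hb1 : 1 ≤ b) (hb2 : b ≤ k + 1) : whittle k E α β 2 b = E := by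
  apply whittle_two_eq_of_g_eq_zero hβ0 hβ1
  rw [g_two, V_one_at_E hE hα (by omega), V_one_at_E hE hα (by omega), if_pos hb1]
  ring

lemma whittle_two_of_add_two_le (hk : 1 ≤ k) (hα : 0 ≤ α) (hβ0 : 0 ≤ β) (hβ1 : β < 1)
    {b : ℕ} (hb : k + 2 ≤ b) :
    whittle k E α β 2 b = E + β * (F α (b - 1 - k) - F α (b - k - k)) := by
  set Δ := F α (b - 1 - k) - F α (b - k - k)
  have hΔ : 0 ≤ Δ := sub_nonneg.2 (F_mono hα (by omega))
  have hβΔ : β * Δ ≤ Δ := mul_le_of_le_one_left hΔ hβ1.le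
  -- convexity, with `b - 2 = m + d` and `b - 2k = m - d` for `m = b - 1 - k`, `d = k - 1`
  have hconv := two_mul_F_le_F_add_add_F_sub hα (b - 1 - k) (k - 1)
  rw [show b - 1 - k + (k - 1) = b - 1 - 1 by omega,
    show b - 1 - k - (k - 1) = b - k - k by omega] at hconv
  have hV₁ : V k E α β (E + β * Δ) 1 (b - 1) = E - F α (b - 1 - k) :=
    V_one_eq_active _ (by omega) (by linarith)
  have hV₂ : V k E α β (E + β * Δ) 1 (b - k) = E - F α (b - k - k) :=
    V_one_eq_active _ (by omega) (by rw [show b - k - 1 = b - 1 - k by omega]; linarith)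
  apply whittle_two_eq_of_g_eq_zero hβ0 hβ1
  rw [g_two, hV₁, hV₂, if_pos (by omega)]
  ring

end Whittle

open Whittle in
theorem whittle_tau_two (k : ℕ) (hk : 1 ≤ k) (E α β : ℝ) (hE : 0 ≤ E) (hα : 0 < α)
    (hβ0 : 0 < β) (hβ1 : β < 1) :
    whittle k E α β 2 0 = 0 ∧
    (∀ b : ℕ, 1 ≤ b → b ≤ k + 1 → whittle k E α β 2 b = E) ∧
    (∀ b : ℕ, k + 2 ≤ b → b ≤ 2 * k →
      whittle k E α β 2 b = E + β * α * ((b : ℝ) - k - 1) ^ 2) ∧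
    (∀ b : ℕ, 2 * k + 1 ≤ b →
      whittle k E α β 2 b = E + β * α * (((b : ℝ) - k - 1) ^ 2 - ((b : ℝ) - 2 * k) ^ 2)) := by
  refine ⟨whittle_two_zero hβ0.le hβ1,
    fun b hb1 hb2 => whittle_two_of_le_succ hk hE hα.le hβ0.le hβ1 hb1 hb2,
    fun b hb1 hb2 => ?_, fun b hb => ?_⟩ <;>
  rw [whittle_two_of_add_two_le hk hα.le hβ0.le hβ1 (by omega), F, F, Nat.sub_sub,
    Nat.cast_sub (by omega : 1 + k ≤ b)]
  · rw [Nat.sub_sub, Nat.sub_eq_zero_of_le (by omega : b ≤ k + k)]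
    push_cast
    ring
  · rw [Nat.sub_sub, Nat.cast_sub (by omega : k + k ≤ b)]
    push_cast
    ring
end

section
/- Indifference at the Whittle index: for every integer τ ≥ 1 and every integer b ≥ 0, when the subsidy equals the Whittle index ω(τ,b), the passive and active actions yield exactly the same value, i.e. g_{ω(τ,b)}(τ,b) = 0. -/
/-!
As a function of the subsidy, `δ ↦ g δ τ b` is continuous, and for `τ ≥ 1` it stays within a
bounded distance of `δ`: the subsidy enters the passive branch once more than the active one, and
continuation values at two backlogs differ by an amount independent of `δ`. Hence
`{δ | 0 ≤ g δ τ b}` is closed, nonempty and bounded below, so its infimum `ω` belongs to it, while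
`g ω τ b ≤ 0` as a limit of the negative values of `g` to the left of `ω`.
-/

open Filter Topology

theorem Continuous.apply_sInf_setOf_nonneg_eq_zero {f : ℝ → ℝ} (hf : Continuous f)
    {K : ℝ} (hK : ∀ x, |f x - x| ≤ K) : f (sInf {x | 0 ≤ f x}) = 0 := by
  set S := {x | 0 ≤ f x}
  have hne : S.Nonempty := ⟨K, show 0 ≤ f K by linarith [(abs_le.mp (hK K)).1]⟩
  have hbdd : BddBelow S := ⟨-K, fun x hx => by linarith [(abs_le.mp (hK x)).2, hx.out]⟩
  have hmem : sInf S ∈ S := (isClosed_le continuous_const hf).csInf_mem hne hbdd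
  have hneg : ∀ x < sInf S, f x ≤ 0 := fun x hx =>
    le_of_lt <| not_le.mp fun h => (csInf_le hbdd h).not_gt hx
  have hleft : Tendsto f (𝓝[<] sInf S) (𝓝 (f (sInf S))) :=
    hf.continuousAt.tendsto.mono_left nhdsWithin_le_nhds
  exact le_antisymm (le_of_tendsto hleft (eventually_nhdsWithin_of_forall hneg)) hmem

section

variable (k : ℕ) (E α β : ℝ)

theorem continuous_V : ∀ τ b, Continuous fun δ => V k E α β δ τ b
  | 0, _ => continuous_const
  | 1, 0 => continuous_id.max continuous_const
  | 1, b + 1 => (continuous_id.sub continuous_const).max continuous_const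
  | t + 2, b => by
    simp only [V]
    have := continuous_V (t + 1) (b - 1)
    have := continuous_V (t + 1) (b - k)
    fun_prop

theorem continuous_g : ∀ τ b, Continuous fun δ => g k E α β δ τ b
  | 0, _ => continuous_const
  | 1, 0 => continuous_id
  | 1, b + 1 => by simp only [g]; fun_prop
  | t + 2, b => by
    simp only [g]
    have := continuous_V k E α β (t + 1) (b - 1)
    have := continuous_V k E α β (t + 1) (b - k)
    fun_prop

theorem exists_V_one_eq_max (b : ℕ) : ∃ p q : ℝ, ∀ δ, V k E α β δ 1 b = max (δ - p) q := by
  cases b with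
  | zero => exact ⟨0, 0, fun δ => by rw [sub_zero]; rfl⟩
  | succ b => exact ⟨F α b, E - F α (b + 1 - k), fun δ => rfl⟩

theorem exists_abs_V_sub_V_le : ∀ τ b₁ b₂, ∃ K, ∀ δ,
    |V k E α β δ τ b₁ - V k E α β δ τ b₂| ≤ K
  | 0, _, _ => ⟨0, fun δ => by simp [V]⟩
  | 1, b₁, b₂ => by
    obtain ⟨p₁, q₁, h₁⟩ := exists_V_one_eq_max k E α β b₁
    obtain ⟨p₂, q₂, h₂⟩ := exists_V_one_eq_max k E α β b₂
    refine ⟨max |p₂ - p₁| |q₁ - q₂|, fun δ => ?_⟩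
    rw [h₁, h₂, ← sub_sub_sub_cancel_left p₁ p₂ δ]
    exact abs_max_sub_max_le_max _ _ _ _
  | t + 2, b₁, b₂ => by
    obtain ⟨K₁, hK₁⟩ := exists_abs_V_sub_V_le (t + 1) (b₁ - 1) (b₂ - 1)
    obtain ⟨K₂, hK₂⟩ := exists_abs_V_sub_V_le (t + 1) (b₁ - k) (b₂ - k)
    refine ⟨max (|β| * K₁) (|(if 1 ≤ b₁ then E else 0) - (if 1 ≤ b₂ then E else 0)| + |β| * K₂),
      fun δ => (abs_max_sub_max_le_max _ _ _ _).trans (max_le_max ?_ ?_)⟩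
    · rw [add_sub_add_left_eq_sub, ← mul_sub, abs_mul]
      grw [hK₁ δ]
    · rw [add_sub_add_comm, ← mul_sub]
      grw [abs_add_le, abs_mul, hK₂ δ]

theorem exists_abs_g_sub_self_le {τ : ℕ} (hτ : 1 ≤ τ) (b : ℕ) :
    ∃ K, ∀ δ, |g k E α β δ τ b - δ| ≤ K := by
  match τ, b with
  | 1, 0 => exact ⟨0, fun δ => by simp [g]⟩
  | 1, b + 1 =>
    refine ⟨|F α (b + 1 - k) - F α b - E|, fun δ => le_of_eq ?_⟩
    simp only [g]
    congr 1
    ring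
  | t + 2, b =>
    obtain ⟨K, hK⟩ := exists_abs_V_sub_V_le k E α β (t + 1) (b - 1) (b - k)
    refine ⟨|β| * K + |E|, fun δ => ?_⟩
    have he : |(if 1 ≤ b then E else 0)| ≤ |E| := by split_ifs <;> simp
    calc |g k E α β δ (t + 2) b - δ|
        = |β * (V k E α β δ (t + 1) (b - 1) - V k E α β δ (t + 1) (b - k))
            - (if 1 ≤ b then E else 0)| := by simp only [g]; congr 1; ring
      _ ≤ |β| * K + |E| := by grw [abs_sub, abs_mul, hK δ, he]

end

theorem indifference_at_whittle_general (k : ℕ) (E α β : ℝ)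
    (τ b : ℕ) (hτ : 1 ≤ τ) :
    g k E α β (whittle k E α β τ b) τ b = 0 := by
  obtain ⟨_, hK⟩ := exists_abs_g_sub_self_le k E α β hτ b
  exact (continuous_g k E α β τ b).apply_sInf_setOf_nonneg_eq_zero hK

theorem indifference_at_whittle (k : ℕ) (hk : 1 ≤ k) (E α β : ℝ) (hE : 0 ≤ E) (hα : 0 < α)
    (hβ0 : 0 < β) (hβ1 : β < 1)
    (τ b : ℕ) (hτ : 1 ≤ τ) :
    g k E α β (whittle k E α β τ b) τ b = 0 :=
  indifference_at_whittle_general k E α β τ b hτ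
end

section
/- Piecewise formula for h_δ(1,0) (Appendix A): assume k ≥ 2. For every real subsidy δ, the difference h_δ(1,0) := V_δ(1,k−1) − V_δ(1,0) equals E if δ < 0; equals E − δ if 0 ≤ δ < E + α·(k−2)²; and equals −α·(k−2)² if δ ≥ E + α·(k−2)². -/
-- Offloading clears a backlog of at most `k` subtasks, so its penalty is `F α 0 = 0`.
theorem V_one_succ_of_lt {k b : ℕ} (E α β δ : ℝ) (hb : b < k) :
    V k E α β δ 1 (b + 1) = max (δ - F α b) E := by
  rw [V, Nat.sub_eq_zero_of_le hb]
  simp [F]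

theorem V_one_pred_of_two_le {k : ℕ} (E α β δ : ℝ) (hk : 2 ≤ k) :
    V k E α β δ 1 (k - 1) = max (δ - α * ((k : ℝ) - 2) ^ 2) E := by
  obtain ⟨b, rfl⟩ : ∃ b, k = b + 2 := ⟨k - 2, by omega⟩
  rw [show b + 2 - 1 = b + 1 by omega, V_one_succ_of_lt E α β δ (by omega), F]
  push_cast
  ring_nf

theorem V_one_zero (k : ℕ) (E α β δ : ℝ) : V k E α β δ 1 0 = max δ 0 := rfl

theorem h_one_zero_piecewise_general (k : ℕ) (hk : 2 ≤ k) (E α β : ℝ) (hE : 0 ≤ E) (hα : 0 < α)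
    (δ : ℝ) :
    (δ < 0 → V k E α β δ 1 (k - 1) - V k E α β δ 1 0 = E) ∧
    (0 ≤ δ → δ < E + α * ((k : ℝ) - 2) ^ 2 →
      V k E α β δ 1 (k - 1) - V k E α β δ 1 0 = E - δ) ∧
    (E + α * ((k : ℝ) - 2) ^ 2 ≤ δ →
      V k E α β δ 1 (k - 1) - V k E α β δ 1 0 = -(α * ((k : ℝ) - 2) ^ 2)) := by
  rw [V_one_pred_of_two_le E α β δ hk, V_one_zero]
  have hpen : 0 ≤ α * ((k : ℝ) - 2) ^ 2 := by positivity
  refine ⟨fun hδ => ?_, fun hδ₀ hδ₁ => ?_, fun hδ => ?_⟩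
  · rw [max_eq_right (by linarith), max_eq_right hδ.le, sub_zero]
  · rw [max_eq_right (by linarith), max_eq_left hδ₀]
  · rw [max_eq_left (by linarith), max_eq_left (by linarith)]
    ring

theorem h_one_zero_piecewise (k : ℕ) (hk : 2 ≤ k) (E α β : ℝ) (hE : 0 ≤ E) (hα : 0 < α)
    (hβ0 : 0 < β) (hβ1 : β < 1) (δ : ℝ) :
    (δ < 0 → V k E α β δ 1 (k - 1) - V k E α β δ 1 0 = E) ∧
    (0 ≤ δ → δ < E + α * ((k : ℝ) - 2) ^ 2 →
      V k E α β δ 1 (k - 1) - V k E α β δ 1 0 = E - δ) ∧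
    (E + α * ((k : ℝ) - 2) ^ 2 ≤ δ →
      V k E α β δ 1 (k - 1) - V k E α β δ 1 0 = -(α * ((k : ℝ) - 2) ^ 2)) :=
  h_one_zero_piecewise_general k hk E α β hE hα δ
end
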